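/- arXiv:2207.06782 — 4 statements merged into one kernel-verified Lean document; each statement's English description precedes it below -/
import Mathlib

section
/- Let f(x_1,...,x_m) = Σ_{1≤i<j≤m} x_i x_j + Σ_{i=1}^m c_i x_i + c_0 and g(x) = f(x) + Σ_{i=1}^m x_i + c' be Boolean functions with c_i, c', c_0 ∈ Z_2. Then the pair (f,g) is a binary Type-II complementary array pair of size 2×2×···×2, i.e., their generating functions satisfy (F(z))^2 + (G(z))^2 = 2·∏_{k=1}^m (1+z_k^2). -/
open MvPolynomial Finset

/-- Generating function of a Boolean function `f : {0,1}^m → Z_2`: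
`F(z) = Σ_{x∈{0,1}^m} (-1)^{f(x)} z_1^{x_1} ⋯ z_m^{x_m}` over `ℤ`. -/
noncomputable def genFun {m : ℕ} (f : (Fin m → ZMod 2) → ZMod 2) :
    MvPolynomial (Fin m) ℤ :=
  ∑ x : Fin m → ZMod 2,
    MvPolynomial.C ((-1 : ℤ) ^ (f x).val) * ∏ i, MvPolynomial.X i ^ (x i).val

/-- `(f,g)` is a binary Type-II complementary array pair of size `2×⋯×2`. -/
noncomputable def IsTypeIIPair {m : ℕ} (f g : (Fin m → ZMod 2) → ZMod 2) : Prop :=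
  genFun f ^ 2 + genFun g ^ 2 = 2 * ∏ k, (1 + MvPolynomial.X k ^ 2)

/-!
Over a commutative ring containing `t` with `t² = -1`, the combination `F + tG` splits into
linear factors. Writing `w` for the weight of `x`, one has `Σ_{i<j} xᵢxⱼ ≡ C(w,2) (mod 2)`, and
`(-1)^C(w,2) (1 + s(-1)^w) = (1 + s)(-s)^w` whenever `s² = -1`; with `δ = (-1)^{c'}` this turns
the coefficient `(-1)^{f(x)} + t(-1)^{g(x)}` into `(-1)^{c₀}(1 + tδ) ∏ₖ aₖ^{xₖ}` with
`aₖ = -(-1)^{cₖ} tδ`, so `F + tG = (-1)^{c₀}(1 + tδ) ∏ₖ (1 + aₖzₖ)`. Multiplying the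
factorisations for `t` and `-t` gives `F² + G² = 2 ∏ₖ (1 + zₖ²)`, since `aₖ² = -1` and
`(1 + tδ)(1 - tδ) = 2`; over `ℂ` take `t = i`.
-/

def signChar (R : Type*) [CommRing R] : AddChar (ZMod 2) R :=
  AddChar.zmodChar 2 (neg_one_sq (R := R))

theorem AddChar.map_sum_eq_prod {A M ι : Type*} [AddCommMonoid A] [CommMonoid M]
    (ψ : AddChar A M) (s : Finset ι) (f : ι → A) :
    ψ (∑ i ∈ s, f i) = ∏ i ∈ s, ψ (f i) := by
  induction s using Finset.cons_induction with
  | empty => simp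
  | cons i s hi ih => rw [sum_cons, prod_cons, AddChar.map_add_eq_mul, ih]

section SignCharacter

variable {R : Type*} [CommRing R]

theorem signChar_apply (a : ZMod 2) : signChar R a = (-1) ^ a.val := rfl

theorem signChar_natCast (n : ℕ) : signChar R n = (-1) ^ n := AddChar.zmodChar_apply' _ n

theorem signChar_mul (a b : ZMod 2) : signChar R (a * b) = signChar R a ^ b.val := by
  rw [← AddChar.map_nsmul_eq_pow, nsmul_eq_mul, ZMod.natCast_zmod_val, mul_comm]

theorem signChar_sq (a : ZMod 2) : signChar R a ^ 2 = 1 := by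
  rw [signChar_apply, ← pow_mul, pow_mul', neg_one_sq, one_pow]

end SignCharacter

section BitVectors

variable {ι : Type*} [Fintype ι] (x : ι → ZMod 2)

theorem ZMod.val_eq_ite_two (a : ZMod 2) : a.val = if a = 1 then 1 else 0 := by
  fin_cases a <;> rfl

theorem sum_val_eq_card_filter_eq_one : ∑ k, (x k).val = #{k | x k = 1} := by
  simp_rw [ZMod.val_eq_ite_two, sum_boole, Nat.cast_id]

theorem sum_filter_lt_mul_eq_choose_two [LinearOrder ι] :
    ∑ p ∈ univ.filter (fun p : ι × ι => p.1 < p.2), x p.1 * x p.2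
      = ((#{k | x k = 1}).choose 2 : ZMod 2) := by
  classical
  have hmul (a b : ZMod 2) : a * b = if a = 1 ∧ b = 1 then 1 else 0 := by
    fin_cases a <;> fin_cases b <;> rfl
  simp_rw [hmul, sum_boole, filter_filter, ← card_product_filter_lt]
  congr 2
  ext p
  simp only [mem_filter, mem_univ, mem_product, true_and]
  tauto

theorem sum_prod_pow_val_eq_prod_one_add {M : Type*} [CommSemiring M] [DecidableEq ι]
    (t : ι → M) :
    ∑ x : ι → ZMod 2, ∏ k, t k ^ (x k).val = ∏ k, (1 + t k) := by
  rw [← Fintype.prod_sum (fun k (b : ZMod 2) ↦ t k ^ b.val)]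
  exact prod_congr rfl fun k _ ↦
    (Fin.sum_univ_two _).trans (by change t k ^ 0 + t k ^ 1 = 1 + t k; ring)

end BitVectors

theorem neg_one_pow_choose_two_mul_one_add {R : Type*} [CommRing R] {t : R} (ht : t ^ 2 = -1)
    (n : ℕ) :
    (-1) ^ n.choose 2 * (1 + t * (-1) ^ n) = (1 + t) * (-t) ^ n := by
  induction n with
  | zero => simp
  | succ n ih =>
    have hsq : ((-1 : R) ^ n) ^ 2 = 1 := by rw [← pow_mul, pow_mul', neg_one_sq, one_pow]
    rw [Nat.choose_succ_succ', Nat.choose_one_right, pow_add, pow_succ, pow_succ]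
    linear_combination (-t) * ih + ((-1) ^ n.choose 2 * (-1) ^ n) * ht
      - ((-1) ^ n.choose 2 * t) * hsq

section StandardForm

variable {R : Type*} [CommRing R] {ι : Type*} [Fintype ι] [LinearOrder ι]
  {c : ι → ZMod 2} {c0 c' : ZMod 2} {f g : (ι → ZMod 2) → ZMod 2}

theorem signChar_add_mul_signChar_of_standard_form {t : R} (ht : t ^ 2 = -1)
    (hf : ∀ x, f x = (∑ p ∈ univ.filter (fun p : ι × ι => p.1 < p.2), x p.1 * x p.2)
      + (∑ i, c i * x i) + c0)
    (hg : ∀ x, g x = f x + (∑ i, x i) + c') (x : ι → ZMod 2) :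
    signChar R (f x) + t * signChar R (g x)
      = signChar R c0 * (1 + t * signChar R c')
        * ∏ k, (signChar R (c k) * -(t * signChar R c')) ^ (x k).val := by
  set n := ∑ k, (x k).val
  set L := ∏ k, signChar R (c k) ^ (x k).val
  have hquad : signChar R (∑ p ∈ univ.filter (fun p : ι × ι => p.1 < p.2), x p.1 * x p.2)
      = (-1) ^ n.choose 2 := by
    rw [sum_filter_lt_mul_eq_choose_two, ← sum_val_eq_card_filter_eq_one, signChar_natCast]
  have hlin : signChar R (∑ i, c i * x i) = L := by
    simp only [AddChar.map_sum_eq_prod, signChar_mul, L]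
  have hweight : signChar R (∑ i, x i) = (-1) ^ n := by
    rw [← signChar_natCast, Nat.cast_sum]
    simp_rw [ZMod.natCast_zmod_val]
  have hprod : ∏ k, (signChar R (c k) * -(t * signChar R c')) ^ (x k).val
      = L * (-(t * signChar R c')) ^ n := by
    rw [← prod_pow_eq_pow_sum, ← prod_mul_distrib]
    simp only [mul_pow]
  have hcore := neg_one_pow_choose_two_mul_one_add
    (by rw [mul_pow, ht, signChar_sq, neg_one_mul] : (t * signChar R c') ^ 2 = -1) n
  rw [hg, hf]
  simp only [AddChar.map_add_eq_mul, hquad, hlin, hweight, hprod]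
  linear_combination (signChar R c0 * L) * hcore

end StandardForm

theorem sum_C_mul_prod_X_pow_val {R σ : Type*} [CommRing R] [Fintype σ] [DecidableEq σ]
    (u : R) (a : σ → R) :
    ∑ x : σ → ZMod 2,
        C (u * ∏ k, a k ^ (x k).val) * ∏ k, (X k : MvPolynomial σ R) ^ (x k).val
      = C u * ∏ k, (1 + C (a k) * X k) := by
  simp_rw [C_mul, map_prod, C_pow, mul_assoc, ← prod_mul_distrib, ← mul_pow, ← mul_sum]
  rw [sum_prod_pow_val_eq_prod_one_add]

theorem one_add_C_mul_X_mul_one_add_C_neg_mul_X {R σ : Type*} [CommRing R] {a : R}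
    (ha : a ^ 2 = -1) (k : σ) :
    (1 + C a * X k) * (1 + C (-a) * X k) = (1 + X k ^ 2 : MvPolynomial σ R) := by
  have hC : (C a : MvPolynomial σ R) ^ 2 = -1 := by rw [← C_pow, ha, C_neg, C_1]
  rw [C_neg]
  linear_combination (-X k ^ 2) * hC

section GeneratingFunction

variable {R : Type*} [CommRing R] {m : ℕ}

theorem map_genFun (f : (Fin m → ZMod 2) → ZMod 2) :
    map (Int.castRingHom R) (genFun f)
      = ∑ x : Fin m → ZMod 2, C (signChar R (f x)) * ∏ i, X i ^ (x i).val := by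
  simp [genFun, signChar_apply]

variable {c : Fin m → ZMod 2} {c0 c' : ZMod 2} {f g : (Fin m → ZMod 2) → ZMod 2}

theorem map_genFun_add_C_mul_map_genFun
    (hf : ∀ x, f x = (∑ p ∈ univ.filter (fun p : Fin m × Fin m => p.1 < p.2), x p.1 * x p.2)
      + (∑ i, c i * x i) + c0)
    (hg : ∀ x, g x = f x + (∑ i, x i) + c') {t : R} (ht : t ^ 2 = -1) :
    map (Int.castRingHom R) (genFun f) + C t * map (Int.castRingHom R) (genFun g)
      = C (signChar R c0 * (1 + t * signChar R c'))
        * ∏ k, (1 + C (signChar R (c k) * -(t * signChar R c')) * X k) := by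
  rw [map_genFun, map_genFun, mul_sum, ← sum_add_distrib, ← sum_C_mul_prod_X_pow_val]
  refine sum_congr rfl fun x _ ↦ ?_
  rw [← signChar_add_mul_signChar_of_standard_form ht hf hg x, C_add, C_mul]
  ring

theorem map_genFun_sq_add_sq
    (hf : ∀ x, f x = (∑ p ∈ univ.filter (fun p : Fin m × Fin m => p.1 < p.2), x p.1 * x p.2)
      + (∑ i, c i * x i) + c0)
    (hg : ∀ x, g x = f x + (∑ i, x i) + c') {t : R} (ht : t ^ 2 = -1) :
    map (Int.castRingHom R) (genFun f) ^ 2 + map (Int.castRingHom R) (genFun g) ^ 2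
      = 2 * ∏ k, (1 + X k ^ 2) := by
  set F := map (Int.castRingHom R) (genFun f)
  set G := map (Int.castRingHom R) (genFun g)
  set δ := signChar R c'
  have hδ : δ ^ 2 = 1 := signChar_sq c'
  have hC : (C t : MvPolynomial (Fin m) R) ^ 2 = -1 := by rw [← C_pow, ht, C_neg, C_1]
  have hscalar : signChar R c0 * (1 + t * δ) * (signChar R c0 * (1 + -t * δ)) = 2 := by
    linear_combination (1 - t ^ 2 * δ ^ 2) * signChar_sq (R := R) c0 - δ ^ 2 * ht + hδ
  have hfactor (k : Fin m) : (1 + C (signChar R (c k) * -(t * δ)) * X k)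
      * (1 + C (signChar R (c k) * -(-t * δ)) * X k) = (1 + X k ^ 2 : MvPolynomial (Fin m) R) := by
    rw [show signChar R (c k) * -(-t * δ) = -(signChar R (c k) * -(t * δ)) by ring]
    exact one_add_C_mul_X_mul_one_add_C_neg_mul_X (by
      linear_combination t ^ 2 * δ ^ 2 * signChar_sq (R := R) (c k) + t ^ 2 * hδ + ht) k
  calc F ^ 2 + G ^ 2 = (F + C t * G) * (F + C (-t) * G) := by
        rw [C_neg]; linear_combination G ^ 2 * hC
    _ = C (signChar R c0 * (1 + t * δ) * (signChar R c0 * (1 + -t * δ)))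
          * ∏ k, ((1 + C (signChar R (c k) * -(t * δ)) * X k)
            * (1 + C (signChar R (c k) * -(-t * δ)) * X k)) := by
        rw [map_genFun_add_C_mul_map_genFun hf hg ht,
          map_genFun_add_C_mul_map_genFun hf hg (by rwa [neg_sq] : (-t) ^ 2 = -1),
          prod_mul_distrib, mul_mul_mul_comm, ← C_mul]
    _ = 2 * ∏ k, (1 + X k ^ 2) := by
        rw [hscalar, prod_congr rfl fun k _ ↦ hfactor k, map_ofNat]

end GeneratingFunction

theorem typeII_of_standard_form (m : ℕ) (c : Fin m → ZMod 2) (c0 c' : ZMod 2)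
    (f g : (Fin m → ZMod 2) → ZMod 2)
    (hf : ∀ x, f x = (∑ p ∈ Finset.univ.filter (fun p : Fin m × Fin m => p.1 < p.2),
        x p.1 * x p.2) + (∑ i, c i * x i) + c0)
    (hg : ∀ x, g x = f x + (∑ i, x i) + c') :
    IsTypeIIPair f g := by
  apply map_injective (Int.castRingHom ℂ) Int.cast_injective
  simpa using map_genFun_sq_add_sq hf hg Complex.I_sq
end

section
/- If (f,g) is a binary Type-II complementary array pair of size 2×2×···×2 (m factors), i.e., F(z)^2 + G(z)^2 = 2∏_{k=1}^m(1+z_k^2), then there exist constants c_0,c_1,...,c_m, c' ∈ Z_2 such that f(x) = Σ_{1≤i<j≤m} x_i x_j + Σ_{i=1}^m c_i x_i + c_0 and g(x) = f(x) + Σ_{i=1}^m x_i + c'. -/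
/-!
Split off the first variable: writing `F = F₀ + z₁ F₁` and `G = G₀ + z₁ G₁` for the slices at
`x₁ = 0, 1` and substituting `z₁ = 0, ±1`, both slices are again Type-II pairs and
`F₀ F₁ + G₀ G₁ = 0`. By induction the slices are standard, with `g_b = f_b + Σ xᵢ + c'_b`. The
constant coefficient of `F₀ F₁ + G₀ G₁` then forces `c'₁ = c'₀ + 1` and the coefficient of `zᵢ`
forces the linear parts of `f₀` and `f₁` to differ by `Σ xᵢ`, which is exactly the new term
`x₁ Σ_{i>1} xᵢ` of the quadratic form in `m + 1` variables.
-/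

open MvPolynomial Finset

theorem ZMod.sum_univ_two {M : Type*} [AddCommMonoid M] (φ : ZMod 2 → M) :
    ∑ b, φ b = φ 0 + φ 1 :=
  Fin.sum_univ_two φ

theorem MvPolynomial.coeff_single_one_mul {σ R : Type*} [CommSemiring R] (i : σ)
    (p q : MvPolynomial σ R) :
    coeff (Finsupp.single i 1) (p * q) =
      coeff (Finsupp.single i 1) p * constantCoeff q +
        constantCoeff p * coeff (Finsupp.single i 1) q := by
  classical
  simp [coeff_mul, Finset.Nat.antidiagonal_succ, constantCoeff_eq]
  ring

section QuadForm

variable {R : Type*} [CommSemiring R] {m : ℕ}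

def quadForm (x : Fin m → R) : R :=
  ∑ p ∈ univ.filter (fun p : Fin m × Fin m => p.1 < p.2), x p.1 * x p.2

theorem quadForm_cons (a : R) (y : Fin m → R) :
    quadForm (Fin.cons a y : Fin (m + 1) → R) = a * ∑ i, y i + quadForm y := by
  simp only [quadForm, sum_filter, Fintype.sum_prod_type, Fin.sum_univ_succ, Fin.cons_zero,
    Fin.cons_succ, Fin.succ_pos, Fin.succ_lt_succ_iff, Fin.not_lt_zero,
    if_true, if_false, zero_add, mul_sum]

@[simp] theorem quadForm_zero : quadForm (0 : Fin m → R) = 0 := by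
  simp [quadForm]

@[simp] theorem quadForm_single (i : Fin m) (a : R) : quadForm (Pi.single i a) = 0 := by
  refine sum_eq_zero fun p hp => ?_
  obtain ⟨j, k⟩ := p
  have hjk : j ≠ k := (mem_filter.mp hp).2.ne
  rcases eq_or_ne j i with rfl | hj
  · simp [Pi.single_eq_of_ne' hjk]
  · simp [Pi.single_eq_of_ne hj]

end QuadForm

section Coefficients

variable {m : ℕ}

noncomputable def expOf {σ : Type*} [Finite σ] (x : σ → ZMod 2) : σ →₀ ℕ :=
  Finsupp.equivFunOnFinite.symm fun i => (x i).val

theorem expOf_injective {σ : Type*} [Finite σ] : Function.Injective (expOf (σ := σ)) :=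
  fun _ _ h => funext fun i => ZMod.val_injective 2 (DFunLike.congr_fun h i)

theorem coeff_expOf_genFun (f : (Fin m → ZMod 2) → ZMod 2) (y : Fin m → ZMod 2) :
    coeff (expOf y) (genFun f) = (-1) ^ (f y).val := by
  classical
  have hexp (x : Fin m → ZMod 2) : Finsupp.indicator univ (fun i _ => (x i).val) = expOf x := by
    ext; simp [expOf]
  simp only [genFun, coeff_sum, coeff_C_mul, coeff_prod_X_pow, hexp, expOf_injective.eq_iff,
    mul_ite, mul_one, mul_zero, sum_ite_eq, mem_univ, if_true]

theorem constantCoeff_genFun (f : (Fin m → ZMod 2) → ZMod 2) :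
    constantCoeff (genFun f) = (-1) ^ (f 0).val := by
  have h0 : expOf (0 : Fin m → ZMod 2) = 0 := by ext; simp [expOf]
  rw [constantCoeff_eq, ← h0, coeff_expOf_genFun]

theorem coeff_single_genFun (f : (Fin m → ZMod 2) → ZMod 2) (i : Fin m) :
    coeff (Finsupp.single i 1) (genFun f) = (-1) ^ (f (Pi.single i 1)).val := by
  have hi : expOf (Pi.single i 1 : Fin m → ZMod 2) = Finsupp.single i 1 := by
    ext j; rcases eq_or_ne j i with rfl | h <;> simp [expOf, *, ZMod.val_one]
  rw [← hi, coeff_expOf_genFun]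

end Coefficients

def sliceHead {m : ℕ} {α : Type*} (f : (Fin (m + 1) → ZMod 2) → α) (b : ZMod 2) :
    (Fin m → ZMod 2) → α :=
  fun y => f (Fin.cons b y)

theorem aeval_cons_genFun {m : ℕ} (f : (Fin (m + 1) → ZMod 2) → ZMod 2)
    (t : MvPolynomial (Fin m) ℤ) :
    aeval (Fin.cons t X) (genFun f) = genFun (sliceHead f 0) + t * genFun (sliceHead f 1) := by
  rw [genFun, map_sum, ← (Fin.consEquiv fun _ => ZMod 2).sum_comp, Fintype.sum_prod_type,
    ZMod.sum_univ_two]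
  simp only [genFun, sliceHead, Fin.consEquiv, Equiv.coe_fn_mk, map_mul, map_prod, map_pow,
    aeval_C, algebraMap_eq, aeval_X, Fin.prod_univ_succ, Fin.cons_zero, Fin.cons_succ, mul_sum]
  refine congrArg₂ (· + ·) (sum_congr rfl fun y _ => ?_) (sum_congr rfl fun y _ => ?_)
  · simp
  · simp [ZMod.val_one]
    ring

theorem IsTypeIIPair.slices {m : ℕ} {f g : (Fin (m + 1) → ZMod 2) → ZMod 2}
    (h : IsTypeIIPair f g) :
    IsTypeIIPair (sliceHead f 0) (sliceHead g 0) ∧ IsTypeIIPair (sliceHead f 1) (sliceHead g 1) ∧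
      genFun (sliceHead f 0) * genFun (sliceHead f 1) +
        genFun (sliceHead g 0) * genFun (sliceHead g 1) = 0 := by
  have key (t : MvPolynomial (Fin m) ℤ) :
      (genFun (sliceHead f 0) + t * genFun (sliceHead f 1)) ^ 2 +
        (genFun (sliceHead g 0) + t * genFun (sliceHead g 1)) ^ 2 =
          2 * ((1 + t ^ 2) * ∏ k, (1 + X k ^ 2)) := by
    have ht := congrArg (aeval (Fin.cons t X)) h
    simp only [map_add, map_pow, map_mul, map_prod, map_one, map_ofNat, aeval_X, aeval_cons_genFun,
      Fin.prod_univ_succ, Fin.cons_zero, Fin.cons_succ] at ht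
    linear_combination ht
  have e0 := key 0
  have e1 := key 1
  have e2 := key (-1)
  refine ⟨by unfold IsTypeIIPair; linear_combination e0, ?_, ?_⟩
  · refine mul_left_cancel₀ (two_ne_zero (α := MvPolynomial (Fin m) ℤ)) ?_
    linear_combination e1 + e2 - 2 * e0
  · refine mul_left_cancel₀ (by norm_num : (4 : MvPolynomial (Fin m) ℤ) ≠ 0) ?_
    linear_combination e1 - e2

def IsStandardPair {m : ℕ} (f g : (Fin m → ZMod 2) → ZMod 2) : Prop :=
  ∃ (c : Fin m → ZMod 2) (c0 c' : ZMod 2),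
    (∀ x, f x = quadForm x + ∑ i, c i * x i + c0) ∧ ∀ x, g x = f x + ∑ i, x i + c'

theorem isStandardPair_fin_zero (f g : (Fin 0 → ZMod 2) → ZMod 2) : IsStandardPair f g := by
  refine ⟨0, f 0, f 0 + g 0, fun x => ?_, fun x => ?_⟩ <;> rw [Subsingleton.elim x 0]
  · simp [quadForm]
  · simp
    grind

/- The constant and `zᵢ` coefficients of `F₀ F₁ + G₀ G₁ = 0` when both slices are standard, with
`f_b(0) = c_b`, `f_b(eᵢ) = a_b + c_b` and `g_b = f_b + Σ xⱼ + d_b`. -/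
theorem eq_add_one_of_constCoeff_cross {c0 c1 d0 d1 : ZMod 2}
    (h : (-1 : ℤ) ^ c0.val * (-1) ^ c1.val + (-1) ^ (c0 + d0).val * (-1) ^ (c1 + d1).val = 0) :
    d1 = d0 + 1 := by
  revert c0 c1 d0 d1; decide

theorem eq_add_one_of_linearCoeff_cross {a0 a1 c0 c1 d0 d1 : ZMod 2} (hd : d1 = d0 + 1)
    (h : (-1 : ℤ) ^ (a0 + c0).val * (-1) ^ c1.val + (-1) ^ c0.val * (-1) ^ (a1 + c1).val +
      ((-1) ^ (a0 + c0 + 1 + d0).val * (-1) ^ (c1 + d1).val +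
        (-1) ^ (c0 + d0).val * (-1) ^ (a1 + c1 + 1 + d1).val) = 0) :
    a1 = a0 + 1 := by
  subst hd; revert a0 a1 c0 c1 d0; decide

theorem IsStandardPair.of_slices {m : ℕ} {f g : (Fin (m + 1) → ZMod 2) → ZMod 2}
    (h0 : IsStandardPair (sliceHead f 0) (sliceHead g 0))
    (h1 : IsStandardPair (sliceHead f 1) (sliceHead g 1))
    (hcross : genFun (sliceHead f 0) * genFun (sliceHead f 1) +
      genFun (sliceHead g 0) * genFun (sliceHead g 1) = 0) :
    IsStandardPair f g := by
  obtain ⟨a0, c0, d0, hf0, hg0⟩ := h0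
  obtain ⟨a1, c1, d1, hf1, hg1⟩ := h1
  have hd : d1 = d0 + 1 := by
    have h := congrArg constantCoeff hcross
    simp only [map_add, map_mul, map_zero, constantCoeff_genFun, hg0, hg1, hf0, hf1, quadForm_zero,
      Pi.zero_apply, mul_zero, sum_const_zero, add_zero, zero_add] at h
    exact eq_add_one_of_constCoeff_cross h
  have ha (i : Fin m) : a1 i = a0 i + 1 := by
    have h := congrArg (coeff (Finsupp.single i 1)) hcross
    simp only [coeff_add, coeff_zero, coeff_single_one_mul, constantCoeff_genFun,
      coeff_single_genFun, hg0, hg1, hf0, hf1, quadForm_zero, quadForm_single, Pi.zero_apply,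
      Pi.single_apply, mul_ite, mul_one, mul_zero, sum_ite_eq', mem_univ, if_true, sum_const_zero,
      add_zero, zero_add] at h
    exact eq_add_one_of_linearCoeff_cross hd h
  have hslice_one (y : Fin m → ZMod 2) : sliceHead f 1 y = sliceHead f 0 y + ∑ i, y i + (c0 + c1) := by
    simp only [hf0, hf1, ha, add_mul, one_mul, sum_add_distrib]
    grind
  have hfb (b : ZMod 2) (y : Fin m → ZMod 2) : f (Fin.cons b y) = sliceHead f b y := rfl
  have hgb (b : ZMod 2) (y : Fin m → ZMod 2) : g (Fin.cons b y) = sliceHead g b y := rfl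
  refine ⟨Fin.cons (c0 + c1) a0, c0, d0, fun x => ?_, fun x => ?_⟩ <;>
  · induction x using Fin.consCases with
    | cons b y =>
      obtain rfl | rfl : b = 0 ∨ b = 1 := by revert b; decide
      all_goals
        simp only [hfb, hgb, hg0, hg1, hslice_one, hf0, hd, quadForm_cons, Fin.sum_univ_succ,
          Fin.cons_zero, Fin.cons_succ]
        ring

theorem typeII_pair_is_standard (m : ℕ) (f g : (Fin m → ZMod 2) → ZMod 2)
    (h : IsTypeIIPair f g) :
    ∃ (c : Fin m → ZMod 2) (c0 c' : ZMod 2),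
      (∀ x, f x = (∑ p ∈ Finset.univ.filter (fun p : Fin m × Fin m => p.1 < p.2),
          x p.1 * x p.2) + (∑ i, c i * x i) + c0) ∧
      (∀ x, g x = f x + (∑ i, x i) + c') := by
  induction m with
  | zero => exact isStandardPair_fin_zero f g
  | succ m ih =>
    obtain ⟨h0, h1, hcross⟩ := h.slices
    exact IsStandardPair.of_slices (ih _ _ h0) (ih _ _ h1) hcross
end

section
/- Let F^0, F^1, G^0, G^1 be nonzero polynomials in ℤ[z_1,...,z_m] satisfying (F^0)^2+(G^0)^2 = 2∏_{k=1}^m(1+z_k^2), (F^1)^2+(G^1)^2 = 2∏_{k=1}^m(1+z_k^2), and F^0·F^1 + G^0·G^1 = 0. Then either (F^1,G^1) = (G^0, -F^0) or (F^1,G^1) = (-G^0, F^0). -/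
open MvPolynomial Finset

theorem typeII_kernel_pm_one (m : ℕ) (F0 F1 G0 G1 : MvPolynomial (Fin m) ℤ)
    (hF0 : F0 ≠ 0) (hF1 : F1 ≠ 0) (hG0 : G0 ≠ 0) (hG1 : G1 ≠ 0)
    (h0 : F0 ^ 2 + G0 ^ 2 = 2 * ∏ k, (1 + MvPolynomial.X k ^ 2))
    (h1 : F1 ^ 2 + G1 ^ 2 = 2 * ∏ k, (1 + MvPolynomial.X k ^ 2))
    (hmix : F0 * F1 + G0 * G1 = 0) :
    (F1 = G0 ∧ G1 = -F0) ∨ (F1 = -G0 ∧ G1 = F0) := by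
  set P := (2 : MvPolynomial (Fin m) ℤ) * ∏ k, (1 + MvPolynomial.X k ^ 2) with hP
  have hPne : P ≠ 0 := by
    have h2 : (2 : MvPolynomial (Fin m) ℤ) ≠ 0 := by norm_num
    have hprod : (∏ k : Fin m, (1 + (MvPolynomial.X k : MvPolynomial (Fin m) ℤ) ^ 2)) ≠ 0 := by
      refine Finset.prod_ne_zero_iff.mpr fun k _ => ?_
      intro h
      have := congrArg MvPolynomial.constantCoeff h
      simp at this
    exact mul_ne_zero h2 hprod
  have hD2 : (F0*G1 - G0*F1)^2 = P^2 := by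
    have h : (F0*G1 - G0*F1)^2 = (F0^2+G0^2)*(F1^2+G1^2) - (F0*F1+G0*G1)^2 := by ring
    rw [h, h0, h1, hmix]; ring
  have hfac : (F0*G1 - G0*F1 - P) * (F0*G1 - G0*F1 + P) = 0 := by
    have h : (F0*G1 - G0*F1 - P) * (F0*G1 - G0*F1 + P)
        = (F0*G1 - G0*F1)^2 - P^2 := by ring
    rw [h, hD2]; ring
  rcases mul_eq_zero.mp hfac with h | h
  · have hD : F0*G1 - G0*F1 = P := by linear_combination h
    right
    have hG1e : P * G1 = P * F0 := by
      have h' : P * G1 = F0 * (F0*G1 - G0*F1) + G0 * (F0*F1 + G0*G1) := by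
        rw [← h0]; ring
      rw [h', hD, hmix]; ring
    have hF1e : P * F1 = P * (-G0) := by
      have h' : P * F1 = -G0 * (F0*G1 - G0*F1) + F0 * (F0*F1 + G0*G1) := by
        rw [← h0]; ring
      rw [h', hD, hmix]; ring
    exact ⟨mul_left_cancel₀ hPne hF1e, mul_left_cancel₀ hPne hG1e⟩
  · have hD : F0*G1 - G0*F1 = -P := by linear_combination h
    left
    have hG1e : P * G1 = P * (-F0) := by
      have h' : P * G1 = F0 * (F0*G1 - G0*F1) + G0 * (F0*F1 + G0*G1) := by
        rw [← h0]; ring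
      rw [h', hD, hmix]; ring
    have hF1e : P * F1 = P * G0 := by
      have h' : P * F1 = -G0 * (F0*G1 - G0*F1) + F0 * (F0*F1 + G0*G1) := by
        rw [← h0]; ring
      rw [h', hD, hmix]; ring
    exact ⟨mul_left_cancel₀ hPne hF1e, mul_left_cancel₀ hPne hG1e⟩
end

section
/- If (f,g) is a binary Type-II complementary array pair of size 2×···×2 (m factors) and π is a permutation of {1,...,m}, then the sequence pair (f̃,g̃) of length 2^m defined by f̃(t) = f(x) and g̃(t) = g(x) where t = Σ_{k=1}^m x_k·2^{π(k)-1}, is a binary Type-II complementary sequence pair: their univariate generating functions satisfy (F(z))^2 + (G(z))^2 = 2(1+z^2+z^4+···+z^{2(2^m-1)}). -/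
open MvPolynomial Finset

/-- Projecting a Type-II complementary array pair of size `2^{(m)}` by a permutation `π`
(substituting `z_k = z^{2^{π(k)-1}}`, i.e. `t = Σ_k x_k 2^{π(k)-1}`) yields a
Type-II complementary sequence pair of length `2^m`. -/
theorem typeII_array_to_sequence (m : ℕ) (f g : (Fin m → ZMod 2) → ZMod 2)
    (h : IsTypeIIPair f g) (π : Equiv.Perm (Fin m))
    (F G : Polynomial ℤ)
    (hF : F = ∑ x : Fin m → ZMod 2, Polynomial.C ((-1 : ℤ) ^ (f x).val) *
        Polynomial.X ^ (∑ k, (x k).val * 2 ^ (π k : ℕ)))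
    (hG : G = ∑ x : Fin m → ZMod 2, Polynomial.C ((-1 : ℤ) ^ (g x).val) *
        Polynomial.X ^ (∑ k, (x k).val * 2 ^ (π k : ℕ))) :
    F ^ 2 + G ^ 2 = 2 * ∑ j ∈ Finset.range (2 ^ m), Polynomial.X ^ (2 * j) := by
  have key : ∀ n : ℕ, ∏ k ∈ Finset.range n, (1 + (Polynomial.X : Polynomial ℤ) ^ (2 * 2 ^ k))
      = ∑ j ∈ Finset.range (2 ^ n), Polynomial.X ^ (2 * j) := by
    intro n
    induction n with
    | zero => simp
    | succ n ih =>
      rw [Finset.prod_range_succ, ih]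
      have hsplit : 2 ^ (n + 1) = 2 ^ n + 2 ^ n := by ring
      rw [hsplit, Finset.sum_range_add, mul_add, mul_one, Finset.sum_mul]
      congr 1
      refine Finset.sum_congr rfl fun j _ => ?_
      rw [← pow_add]
      congr 1
      ring
  -- apply the substitution homomorphism
  let σ : MvPolynomial (Fin m) ℤ →ₐ[ℤ] Polynomial ℤ :=
    MvPolynomial.aeval (fun k : Fin m => (Polynomial.X : Polynomial ℤ) ^ (2 ^ (π k : ℕ)))
  have hσf : σ (genFun f) = F := by
    rw [hF]
    simp only [genFun, map_sum, map_mul, map_prod, map_pow, MvPolynomial.aeval_X,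
      MvPolynomial.aeval_C, σ, ← pow_mul]
    refine Finset.sum_congr rfl fun x _ => ?_
    rw [Finset.prod_pow_eq_pow_sum]
    congr 2
    exact Finset.sum_congr rfl fun k _ => mul_comm _ _
  have hσg : σ (genFun g) = G := by
    rw [hG]
    simp only [genFun, map_sum, map_mul, map_prod, map_pow, MvPolynomial.aeval_X,
      MvPolynomial.aeval_C, σ, ← pow_mul]
    refine Finset.sum_congr rfl fun x _ => ?_
    rw [Finset.prod_pow_eq_pow_sum]
    congr 2
    exact Finset.sum_congr rfl fun k _ => mul_comm _ _
  have h2 := congrArg σ h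
  simp only [map_add, map_mul, map_pow, map_prod, map_ofNat, map_one, MvPolynomial.aeval_X,
    hσf, hσg, σ] at h2
  rw [h2]
  congr 1
  have hperm : ∏ k : Fin m, (1 + ((Polynomial.X : Polynomial ℤ) ^ (2 ^ (π k : ℕ))) ^ 2)
      = ∏ k : Fin m, (1 + (Polynomial.X : Polynomial ℤ) ^ (2 * 2 ^ (k : ℕ))) := by
    rw [← Equiv.prod_comp π (fun k : Fin m => (1 + (Polynomial.X : Polynomial ℤ) ^ (2 * 2 ^ (k : ℕ))))]
    refine Finset.prod_congr rfl fun k _ => ?_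
    rw [← pow_mul (Polynomial.X : Polynomial ℤ) (2 ^ (π k : ℕ)) 2, mul_comm]
  rw [hperm, Fin.prod_univ_eq_prod_range
    (fun k => (1 + (Polynomial.X : Polynomial ℤ) ^ (2 * 2 ^ k))), key]
end
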